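/- arXiv:math-ph/0208006 — 2 statements merged into one kernel-verified Lean document; each statement's English description precedes it below -/
import Mathlib

section
/- Solution of the first-order τ-difference equation: if ψ satisfies ∂_τψ = f·ψ, i.e. ψ(τ(x)) = (1 − (x − τ(x))f(x))·ψ(x) with 1 − (x−τ(x))f(x) > 0, and the infinite product converges, then ψ(x) = exp(∫_{τ^∞(x)}^x (−ln(1 − (t − τ(t))f(t)))/(t − τ(t)) d_τ t) · ψ(τ^∞(x)). -/
open Filter Topology

/-- Solution of the first-order τ-difference equation `∂_τ ψ = f ψ`:
`ψ(x) = exp(∫_{τ^∞(x)}^x (−ln(1 − (t − τ(t)) f(t)))/(t − τ(t)) d_τ t) ⋅ ψ(τ^∞(x))`. -/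
theorem tau_first_order_solution (τ : ℝ → ℝ) (hfix : ∀ y, τ y ≠ y)
    (f : ℝ → ℝ) (ψ : ℝ → ℝ)
    (heq : ∀ y, ψ (τ y) = (1 - (y - τ y) * f y) * ψ y)
    (hpos : ∀ y, 0 < 1 - (y - τ y) * f y)
    (x L : ℝ)
    (hlim : Tendsto (fun n => τ^[n] x) atTop (𝓝 L))
    (hcont : ContinuousAt ψ L)
    (hsum : Summable (fun n : ℕ =>
      (τ^[n] x - τ^[n + 1] x) *
        (-Real.log (1 - (τ^[n] x - τ (τ^[n] x)) * f (τ^[n] x)) /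
          (τ^[n] x - τ (τ^[n] x))))) :
    ψ x = Real.exp (∑' n : ℕ,
        (τ^[n] x - τ^[n + 1] x) *
          (-Real.log (1 - (τ^[n] x - τ (τ^[n] x)) * f (τ^[n] x)) /
            (τ^[n] x - τ (τ^[n] x)))) * ψ L := by
  set g : ℕ → ℝ := fun n =>
      (τ^[n] x - τ^[n + 1] x) *
        (-Real.log (1 - (τ^[n] x - τ (τ^[n] x)) * f (τ^[n] x)) /
          (τ^[n] x - τ (τ^[n] x))) with hg
  have hgn : ∀ n, g n = -Real.log (1 - (τ^[n] x - τ (τ^[n] x)) * f (τ^[n] x)) := by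
    intro n
    have hne : τ^[n] x - τ (τ^[n] x) ≠ 0 := sub_ne_zero.2 (Ne.symm (hfix _))
    have h1 : τ^[n + 1] x = τ (τ^[n] x) := Function.iterate_succ_apply' τ n x
    rw [hg]
    simp only [h1]
    field_simp
  have key : ∀ N : ℕ, ψ x = Real.exp (∑ n ∈ Finset.range N, g n) * ψ (τ^[N] x) := by
    intro N
    induction N with
    | zero => simp
    | succ N ih =>
      rw [Finset.sum_range_succ, Real.exp_add, Function.iterate_succ_apply',
        heq (τ^[N] x), hgn]
      rw [Real.exp_neg, Real.exp_log (hpos _)]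
      rw [ih]
      have hc := (hpos (τ^[N] x)).ne'
      field_simp
  have h1 : Tendsto (fun N => Real.exp (∑ n ∈ Finset.range N, g n) * ψ (τ^[N] x))
      atTop (𝓝 (Real.exp (∑' n, g n) * ψ L)) := by
    exact ((Real.continuous_exp.continuousAt.tendsto.comp
      hsum.hasSum.tendsto_sum_nat)).mul (hcont.tendsto.comp hlim)
  have h2 : Tendsto (fun _ : ℕ => ψ x) atTop (𝓝 (ψ x)) := tendsto_const_nhds
  have := tendsto_nhds_unique h2 (by simpa only [← key] using h1)
  exact this
end

section
/- Convergence of the matrix resolvent: if ∑_{k=0}^∞ |τ^k(x) − τ^{k+1}(x)| < ∞ and the matrix-valued function Λ̃ is continuous at τ^∞(x) (in particular, bounded along the orbit), then the sequence of matrix products P_n = Λ(τ^n(x))⋯Λ(τ(x))Λ(x), where Λ(y) = I − (y − τ(y))Λ̃(y), is a Cauchy sequence in the space of 2×2 complex matrices and hence converges. -/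
open Filter Topology

attribute [local instance] Matrix.linftyOpNormedRing
attribute [local instance] Matrix.linftyOpIsBoundedSMul

/-- Convergence of the matrix resolvent: with `Λ(y) = I − (y − τ(y)) Λ̃(y)` and
`P_n = Λ(τ^n(x)) ⋯ Λ(τ(x)) Λ(x)`, if `∑ |τ^k(x) − τ^{k+1}(x)| < ∞` and `Λ̃` is continuous
at `τ^∞(x)`, then `(P_n)` is a Cauchy sequence (hence convergent). -/
theorem matrix_resolvent_cauchy (τ : ℝ → ℝ) (hτ : Function.Bijective τ)
    (Lam : ℝ → Matrix (Fin 2) (Fin 2) ℂ) (Lamt : ℝ → Matrix (Fin 2) (Fin 2) ℂ)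
    (hLam : ∀ y, Lam y = 1 - ((y : ℂ) - (τ y : ℂ)) • Lamt y)
    (x tinfx : ℝ)
    (hlim : Tendsto (fun n => τ^[n] x) atTop (𝓝 tinfx))
    (hsum : Summable (fun k : ℕ => |τ^[k] x - τ^[k + 1] x|))
    (hcont : ContinuousAt Lamt tinfx)
    (P : ℕ → Matrix (Fin 2) (Fin 2) ℂ)
    (hP0 : P 0 = Lam x)
    (hPsucc : ∀ n, P (n + 1) = Lam (τ^[n + 1] x) * P n) :
    CauchySeq P := by
  set a : ℕ → ℝ := fun k => τ^[k] x - τ^[k + 1] x with ha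
  -- boundedness of Lamt along the orbit
  have htend : Tendsto (fun n => ‖Lamt (τ^[n] x)‖) atTop (𝓝 ‖Lamt tinfx‖) :=
    (hcont.tendsto.comp hlim).norm
  obtain ⟨C0, hC0⟩ := htend.bddAbove_range
  set C : ℝ := max C0 0 with hC
  have hCnonneg : 0 ≤ C := le_max_right _ _
  have hCb : ∀ n, ‖Lamt (τ^[n] x)‖ ≤ C := fun n =>
    le_trans (hC0 ⟨n, rfl⟩) (le_max_left _ _)
  -- the key difference formula
  have hkey : ∀ k, ‖Lam (τ^[k] x) - 1‖ ≤ C * |a k| := by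
    intro k
    rw [hLam]
    rw [sub_sub_cancel_left, norm_neg]
    refine (norm_smul_le _ _).trans ?_
    have h2 : ‖(τ^[k] x : ℂ) - (τ (τ^[k] x) : ℂ)‖ = |a k| := by
      rw [← Complex.ofReal_sub, Complex.norm_real, Real.norm_eq_abs, ha]
      simp [Function.iterate_succ_apply']
    rw [h2, mul_comm]
    exact mul_le_mul_of_nonneg_right (hCb k) (abs_nonneg _)
  have hLamnorm : ∀ k, ‖Lam (τ^[k] x)‖ ≤ 1 + C * |a k| := by
    intro k
    calc ‖Lam (τ^[k] x)‖ = ‖1 + (Lam (τ^[k] x) - 1)‖ := by rw [add_sub_cancel]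
      _ ≤ ‖(1 : Matrix (Fin 2) (Fin 2) ℂ)‖ + ‖Lam (τ^[k] x) - 1‖ := norm_add_le _ _
      _ ≤ 1 + C * |a k| := by rw [norm_one]; linarith [hkey k]
  -- bound on the partial products
  set S : ℝ := ∑' k, |a k| with hS
  have hB : ∀ n, ‖P n‖ ≤ Real.exp (C * S) := by
    have hprod : ∀ n, ‖P n‖ ≤ ∏ k ∈ Finset.range (n + 1), (1 + C * |a k|) := by
      intro n
      induction n with
      | zero =>
        simpa [hP0, Finset.prod_range_one] using
          (by simpa using hLamnorm 0 : ‖Lam x‖ ≤ 1 + C * |a 0|)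
      | succ n ih =>
        rw [hPsucc n, Finset.prod_range_succ]
        calc ‖Lam (τ^[n + 1] x) * P n‖ ≤ ‖Lam (τ^[n + 1] x)‖ * ‖P n‖ := norm_mul_le _ _
          _ ≤ (1 + C * |a (n + 1)|) * ∏ k ∈ Finset.range (n + 1), (1 + C * |a k|) := by
              apply mul_le_mul (hLamnorm (n + 1)) ih (norm_nonneg _)
              positivity
          _ = (∏ k ∈ Finset.range (n + 1), (1 + C * |a k|)) * (1 + C * |a (n + 1)|) := by ring
    intro n
    refine (hprod n).trans ?_
    calc ∏ k ∈ Finset.range (n + 1), (1 + C * |a k|)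
        ≤ ∏ k ∈ Finset.range (n + 1), Real.exp (C * |a k|) := by
          apply Finset.prod_le_prod
          · intro i _; positivity
          · intro i _
            have := Real.add_one_le_exp (C * |a i|)
            linarith
      _ = Real.exp (∑ k ∈ Finset.range (n + 1), C * |a k|) := (Real.exp_sum _ _).symm
      _ ≤ Real.exp (C * S) := by
          apply Real.exp_le_exp.mpr
          rw [← Finset.mul_sum]
          apply mul_le_mul_of_nonneg_left _ hCnonneg
          exact Summable.sum_le_tsum _ (fun i _ => abs_nonneg _) hsum
  -- summability of the increments
  apply cauchySeq_of_summable_dist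
  have hsum' : Summable (fun n : ℕ => C * Real.exp (C * S) * |a (n + 1)|) :=
    (((summable_nat_add_iff 1).mpr hsum)).mul_left _
  apply Summable.of_nonneg_of_le (fun n => dist_nonneg) _ hsum'
  intro n
  rw [dist_eq_norm]
  have hdiff : P n - P (n + 1) = -((Lam (τ^[n + 1] x) - 1) * P n) := by
    rw [hPsucc n]; noncomm_ring
  rw [hdiff, norm_neg]
  calc ‖(Lam (τ^[n + 1] x) - 1) * P n‖ ≤ ‖Lam (τ^[n + 1] x) - 1‖ * ‖P n‖ := norm_mul_le _ _
    _ ≤ (C * |a (n + 1)|) * Real.exp (C * S) := by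
        apply mul_le_mul (hkey (n + 1)) (hB n) (norm_nonneg _)
        positivity
    _ = C * Real.exp (C * S) * |a (n + 1)| := by ring
end
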